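/- arXiv:1801.02598 — 2 statements merged into one kernel-verified Lean document; each statement's English description precedes it below -/
import Mathlib

section
/- Let X and Y be nonempty subsets of A⁺. If XY and YX are bifix codes, then X and Y are bifix codes; if XY and YX are maximal bifix codes and thin, then X and Y are maximal bifix codes and thin. -/
open List

/-- The (catenation) product `XY` of two languages. -/
def ProdL {A : Type*} (X Y : Set (List A)) : Set (List A) :=
  {z | ∃ x ∈ X, ∃ y ∈ Y, z = x ++ y}

/-- The product `XY` is unambiguous. -/
def Unamb {A : Type*} (X Y : Set (List A)) : Prop :=
  ∀ x₁ ∈ X, ∀ y₁ ∈ Y, ∀ x₂ ∈ X, ∀ y₂ ∈ Y,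
    x₁ ++ y₁ = x₂ ++ y₂ → x₁ = x₂ ∧ y₁ = y₂

/-- `X ⊆ A⁺` is a code: any equality of two (nonempty) factorizations over `X`
forces the factorizations to coincide. -/
def IsCode {A : Type*} (X : Set (List A)) : Prop :=
  ([] : List A) ∉ X ∧
  ∀ xs ys : List (List A), xs ≠ [] → ys ≠ [] →
    (∀ w ∈ xs, w ∈ X) → (∀ w ∈ ys, w ∈ X) → xs.flatten = ys.flatten → xs = ys

/-- `us` is an alternative factorization on `(X, Y)`: it has length at least 2,
its words lie in `X ∪ Y`, and consecutive words alternate between `X` and `Y`. -/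
def IsAltFact {A : Type*} (X Y : Set (List A)) (us : List (List A)) : Prop :=
  2 ≤ us.length ∧ (∀ w ∈ us, w ∈ X ∪ Y) ∧
  us.Chain' (fun u v => (u ∈ X → v ∈ Y) ∧ (u ∈ Y → v ∈ X))

/-- Two alternative factorizations are similar: they begin with words in the same
set (`X` or `Y`) and they end with words in the same set. -/
def SimilarFact {A : Type*} (X Y : Set (List A)) (us vs : List (List A)) : Prop :=
  (∀ u ∈ us.head?, ∀ v ∈ vs.head?, (u ∈ X ∧ v ∈ X) ∨ (u ∈ Y ∧ v ∈ Y)) ∧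
  (∀ u ∈ us.getLast?, ∀ v ∈ vs.getLast?, (u ∈ X ∧ v ∈ X) ∨ (u ∈ Y ∧ v ∈ Y))

/-- `(X, Y)` is an alternative code: `X, Y` are nonempty subsets of `A⁺` and no
word admits two different similar alternative factorizations on `(X, Y)`. -/
def IsAltCode {A : Type*} (X Y : Set (List A)) : Prop :=
  X.Nonempty ∧ Y.Nonempty ∧ ([] : List A) ∉ X ∧ ([] : List A) ∉ Y ∧
  ∀ us vs : List (List A), IsAltFact X Y us → IsAltFact X Y vs →
    SimilarFact X Y us vs → us.flatten = vs.flatten → us = vs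

/-- `Z` is an alt-induced code: `Z = XY` for some alternative code `(X, Y)`. -/
def IsAltInduced {A : Type*} (Z : Set (List A)) : Prop :=
  ∃ X Y : Set (List A), IsAltCode X Y ∧ Z = ProdL X Y

/-- `X ⊆ A⁺` is a prefix code: no word of `X` is a proper prefix of another word of `X`. -/
def IsPrefixCode {A : Type*} (X : Set (List A)) : Prop :=
  ([] : List A) ∉ X ∧ ∀ u ∈ X, ∀ v ∈ X, u <+: v → u = v

/-- `X ⊆ A⁺` is a suffix code: no word of `X` is a proper suffix of another word of `X`. -/
def IsSuffixCode {A : Type*} (X : Set (List A)) : Prop :=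
  ([] : List A) ∉ X ∧ ∀ u ∈ X, ∀ v ∈ X, u <:+ v → u = v

/-- A bifix code is both a prefix code and a suffix code. -/
def IsBifixCode {A : Type*} (X : Set (List A)) : Prop :=
  IsPrefixCode X ∧ IsSuffixCode X

/-- A maximal prefix code: a prefix code not properly contained in another prefix code. -/
def IsMaximalPrefixCode {A : Type*} (X : Set (List A)) : Prop :=
  IsPrefixCode X ∧ ∀ X' : Set (List A), IsPrefixCode X' → X ⊆ X' → X = X'

/-- A maximal suffix code: a suffix code not properly contained in another suffix code. -/
def IsMaximalSuffixCode {A : Type*} (X : Set (List A)) : Prop :=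
  IsSuffixCode X ∧ ∀ X' : Set (List A), IsSuffixCode X' → X ⊆ X' → X = X'

/-- A maximal bifix code: a bifix code not properly contained in another bifix code. -/
def IsMaximalBifixCode {A : Type*} (X : Set (List A)) : Prop :=
  IsBifixCode X ∧ ∀ X' : Set (List A), IsBifixCode X' → X ⊆ X' → X = X'

/-- `X` is thin: some word `w` is not a factor (infix) of any word of `X`. -/
def IsThin {A : Type*} (X : Set (List A)) : Prop :=
  ∃ w : List A, ∀ u v : List A, u ++ w ++ v ∉ X

/-- The left quotient `X⁻¹Y = {u | ∃ x ∈ X, xu ∈ Y}`. -/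
def lQuot {A : Type*} (X Y : Set (List A)) : Set (List A) :=
  {u | ∃ x ∈ X, x ++ u ∈ Y}

/-- The right quotient `XY⁻¹ = {u | ∃ y ∈ Y, uy ∈ X}`. -/
def rQuot {A : Type*} (X Y : Set (List A)) : Set (List A) :=
  {u | ∃ y ∈ Y, u ++ y ∈ X}

/-- `(X, Y)` is a strong alternative code: an alternative code with
`X⁻¹(XY) ⊆ Y` and `(XY)Y⁻¹ ⊆ X`. -/
def IsStrongAltCode {A : Type*} (X Y : Set (List A)) : Prop :=
  IsAltCode X Y ∧ lQuot X (ProdL X Y) ⊆ Y ∧ rQuot (ProdL X Y) Y ⊆ X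

/-- `Z` is a strong alt-induced code: `Z = XY` for some strong alternative code `(X, Y)`. -/
def IsStrongAltInduced {A : Type*} (Z : Set (List A)) : Prop :=
  ∃ X Y : Set (List A), IsStrongAltCode X Y ∧ Z = ProdL X Y

/-- `Z_a`: the set of words of `Z` beginning with the letter `a`. -/
def Za {A : Type*} (a : A) (Z : Set (List A)) : Set (List A) :=
  {w ∈ Z | w.head? = some a}

/-- A finite code `Z` is of standard form: all its words have length at least 2,
not all of its words begin with the same letter, and not all of its words end
with the same letter. -/
def StandardForm {A : Type*} (Z : Set (List A)) : Prop :=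
  (∀ w ∈ Z, 2 ≤ w.length) ∧
  ¬ (∃ a : A, ∀ w ∈ Z, w.head? = some a) ∧
  ¬ (∃ a : A, ∀ w ∈ Z, w.getLast? = some a)


lemma memProdL {A : Type*} {X Y : Set (List A)} {x y : List A}
    (hx : x ∈ X) (hy : y ∈ Y) : x ++ y ∈ ProdL X Y :=
  ⟨x, hx, y, hy, rfl⟩

lemma prodL_isPrefixCode {A : Type*} {X Y : Set (List A)}
    (hX : IsPrefixCode X) (hY : IsPrefixCode Y) : IsPrefixCode (ProdL X Y) := by
  constructor
  · rintro ⟨x, hx, y, hy, hxy⟩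
    rcases List.append_eq_nil_iff.mp hxy.symm with ⟨rfl, -⟩
    exact hX.1 hx
  · rintro _ ⟨x1, hx1, y1, hy1, rfl⟩ _ ⟨x2, hx2, y2, hy2, rfl⟩ hp
    have hx12 : x1 = x2 := by
      have h1 : x1 <+: x2 ++ y2 := (x1.prefix_append y1).trans hp
      have h2 : x2 <+: x2 ++ y2 := x2.prefix_append y2
      rcases List.prefix_or_prefix_of_prefix h1 h2 with h | h
      · exact hX.2 _ hx1 _ hx2 h
      · exact (hX.2 _ hx2 _ hx1 h).symm
    subst hx12
    have hy12 : y1 <+: y2 := by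
      obtain ⟨t, ht⟩ := hp
      exact ⟨t, by simpa [List.append_assoc] using ht⟩
    rw [hY.2 _ hy1 _ hy2 hy12]

lemma prodL_isSuffixCode {A : Type*} {X Y : Set (List A)}
    (hX : IsSuffixCode X) (hY : IsSuffixCode Y) : IsSuffixCode (ProdL X Y) := by
  constructor
  · rintro ⟨x, hx, y, hy, hxy⟩
    rcases List.append_eq_nil_iff.mp hxy.symm with ⟨rfl, -⟩
    exact hX.1 hx
  · rintro _ ⟨x1, hx1, y1, hy1, rfl⟩ _ ⟨x2, hx2, y2, hy2, rfl⟩ hp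
    have hy12 : y1 = y2 := by
      have h1 : y1 <:+ x2 ++ y2 := (List.suffix_append x1 y1).trans hp
      have h2 : y2 <:+ x2 ++ y2 := List.suffix_append x2 y2
      rcases List.suffix_or_suffix_of_suffix h1 h2 with h | h
      · exact hY.2 _ hy1 _ hy2 h
      · exact (hY.2 _ hy2 _ hy1 h).symm
    subst hy12
    have hx12 : x1 <:+ x2 := by
      obtain ⟨t, ht⟩ := hp
      exact ⟨t, by simpa [← List.append_assoc] using ht⟩
    rw [hX.2 _ hx1 _ hx2 hx12]

lemma prodL_isBifixCode {A : Type*} {X Y : Set (List A)}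
    (hX : IsBifixCode X) (hY : IsBifixCode Y) : IsBifixCode (ProdL X Y) :=
  ⟨prodL_isPrefixCode hX.1 hY.1, prodL_isSuffixCode hX.2 hY.2⟩

lemma prodL_mono_left {A : Type*} {X X' Y : Set (List A)} (h : X ⊆ X') :
    ProdL X Y ⊆ ProdL X' Y := by
  rintro _ ⟨x, hx, y, hy, rfl⟩
  exact ⟨x, h hx, y, hy, rfl⟩


lemma bifix_of_prodL {A : Type*} {X Y : Set (List A)}
    (hX : X.Nonempty) (hY : Y.Nonempty)
    (hXe : ([] : List A) ∉ X) (hYe : ([] : List A) ∉ Y)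
    (hXY : IsBifixCode (ProdL X Y)) (hYX : IsBifixCode (ProdL Y X)) :
    IsBifixCode X ∧ IsBifixCode Y := by
  have hXp : IsPrefixCode X := by
    refine ⟨hXe, fun u hu v hv huv => ?_⟩
    obtain ⟨y, hy⟩ := hY
    obtain ⟨t, rfl⟩ := huv
    have h1 : y ++ u ∈ ProdL Y X := memProdL hy hu
    have h2 : y ++ (u ++ t) ∈ ProdL Y X := memProdL hy hv
    have := hYX.1.2 _ h1 _ h2 ⟨t, by simp [List.append_assoc]⟩
    have := List.append_cancel_left this
    simpa using this.symm
  have hXs : IsSuffixCode X := by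
    refine ⟨hXe, fun u hu v hv huv => ?_⟩
    obtain ⟨y, hy⟩ := hY
    obtain ⟨t, rfl⟩ := huv
    have h1 : u ++ y ∈ ProdL X Y := memProdL hu hy
    have h2 : (t ++ u) ++ y ∈ ProdL X Y := memProdL hv hy
    have := hXY.2.2 _ h1 _ h2 ⟨t, by simp [List.append_assoc]⟩
    have := List.append_cancel_right this
    simpa using this.symm
  have hYp : IsPrefixCode Y := by
    refine ⟨hYe, fun u hu v hv huv => ?_⟩
    obtain ⟨x, hx⟩ := hX
    obtain ⟨t, rfl⟩ := huv
    have h1 : x ++ u ∈ ProdL X Y := memProdL hx hu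
    have h2 : x ++ (u ++ t) ∈ ProdL X Y := memProdL hx hv
    have := hXY.1.2 _ h1 _ h2 ⟨t, by simp [List.append_assoc]⟩
    have := List.append_cancel_left this
    simpa using this.symm
  have hYs : IsSuffixCode Y := by
    refine ⟨hYe, fun u hu v hv huv => ?_⟩
    obtain ⟨x, hx⟩ := hX
    obtain ⟨t, rfl⟩ := huv
    have h1 : u ++ x ∈ ProdL Y X := memProdL hu hx
    have h2 : (t ++ u) ++ x ∈ ProdL Y X := memProdL hv hx
    have := hYX.2.2 _ h1 _ h2 ⟨t, by simp [List.append_assoc]⟩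
    have := List.append_cancel_right this
    simpa using this.symm
  exact ⟨⟨hXp, hXs⟩, ⟨hYp, hYs⟩⟩

/-- If `XY` and `YX` are bifix codes, then `X` and `Y` are bifix codes; if `XY`
and `YX` are maximal bifix codes and thin, then `X` and `Y` are maximal bifix
codes and thin. -/
theorem stmt10 {A : Type*} [Fintype A] [Nonempty A]
    (X Y : Set (List A)) (hX : X.Nonempty) (hY : Y.Nonempty)
    (hXe : ([] : List A) ∉ X) (hYe : ([] : List A) ∉ Y) :
    (IsBifixCode (ProdL X Y) → IsBifixCode (ProdL Y X) →
      IsBifixCode X ∧ IsBifixCode Y) ∧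
    (IsMaximalBifixCode (ProdL X Y) → IsThin (ProdL X Y) →
     IsMaximalBifixCode (ProdL Y X) → IsThin (ProdL Y X) →
      IsMaximalBifixCode X ∧ IsThin X ∧ IsMaximalBifixCode Y ∧ IsThin Y) := by
  refine ⟨bifix_of_prodL hX hY hXe hYe, ?_⟩
  intro hMXY hTXY hMYX hTYX
  obtain ⟨hBX, hBY⟩ := bifix_of_prodL hX hY hXe hYe hMXY.1 hMYX.1
  obtain ⟨w, hw⟩ := hTXY
  have hTX : IsThin X := by
    refine ⟨w, fun u v huv => ?_⟩
    obtain ⟨y, hy⟩ := hY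
    exact hw u (v ++ y) (by
      have : (u ++ w ++ v) ++ y ∈ ProdL X Y := memProdL huv hy
      simpa [List.append_assoc] using this)
  have hTY : IsThin Y := by
    refine ⟨w, fun u v huv => ?_⟩
    obtain ⟨x, hx⟩ := hX
    exact hw (x ++ u) v (by
      have : x ++ (u ++ w ++ v) ∈ ProdL X Y := memProdL hx huv
      simpa [List.append_assoc] using this)
  have hMX : IsMaximalBifixCode X := by
    refine ⟨hBX, fun X' hX' hsub => ?_⟩
    have heq : ProdL X Y = ProdL X' Y :=
      hMXY.2 _ (prodL_isBifixCode hX' hBY) (prodL_mono_left hsub)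
    refine Set.Subset.antisymm hsub fun x' hx' => ?_
    obtain ⟨y, hy⟩ := hY
    have hm : x' ++ y ∈ ProdL X Y := heq ▸ memProdL hx' hy
    obtain ⟨x, hx0, y', hy', hxy⟩ := hm
    have h1 : x <+: x' ++ y := hxy ▸ x.prefix_append y'
    have h2 : x' <+: x' ++ y := x'.prefix_append y
    have hxx : x = x' := by
      rcases List.prefix_or_prefix_of_prefix h1 h2 with h | h
      · exact hX'.1.2 _ (hsub hx0) _ hx' h
      · exact (hX'.1.2 _ hx' _ (hsub hx0) h).symm
    exact hxx ▸ hx0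
  have hMY : IsMaximalBifixCode Y := by
    refine ⟨hBY, fun Y' hY' hsub => ?_⟩
    have heq : ProdL Y X = ProdL Y' X :=
      hMYX.2 _ (prodL_isBifixCode hY' hBX) (prodL_mono_left hsub)
    refine Set.Subset.antisymm hsub fun y' hy' => ?_
    obtain ⟨x, hx0⟩ := hX
    have hm : y' ++ x ∈ ProdL Y X := heq ▸ memProdL hy' hx0
    obtain ⟨y, hy0, x', hx', hxy⟩ := hm
    have h1 : y <+: y' ++ x := hxy ▸ y.prefix_append x'
    have h2 : y' <+: y' ++ x := y'.prefix_append x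
    have hyy : y = y' := by
      rcases List.prefix_or_prefix_of_prefix h1 h2 with h | h
      · exact hY'.1.2 _ (hsub hy0) _ hy' h
      · exact (hY'.1.2 _ hy' _ (hsub hy0) h).symm
    exact hyy ▸ hy0
  exact ⟨hMX, hTX, hMY, hTY⟩
end

section
/- Let X and Y be nonempty subsets of A⁺. Then XY and YX are both bifix codes and alt-induced codes if and only if X and Y are bifix codes; and XY and YX are both maximal bifix codes, thin, and alt-induced codes if and only if X and Y are maximal bifix codes and thin. -/
open List

/-!
Products and cancellation show that `XY` and `YX` are bifix exactly when `X` and `Y` are, and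
when `X` and `Y` are prefix codes an alternating factorization is parsed uniquely from its
first factor, so `(X, Y)` is an alternative code.

For the maximal case the key fact is that a thin maximal bifix code `X` is a maximal prefix code.
Let `d` be a nonempty word that is not a factor of `X`. By maximality, either every word
containing `d` has a prefix in `X`, or every such word has a suffix in `X`; in the second case
every word `w` satisfies `tw ∈ X*` for some `t`, and comparing the cut points of a factorization
of `t e^(|e|+1)` inside the copies of `e` (pigeonhole) brings us back to the first case. Products
of maximal prefix codes are maximal prefix codes, which gives the maximality of `XY` and `YX`.
-/

open Computability

section PrefixSuffix

variable {A : Type*} {X Y : Set (List A)}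

theorem IsPrefixCode.eq_of_prefix_of_prefix (hX : IsPrefixCode X) {u v w : List A}
    (hu : u ∈ X) (hv : v ∈ X) (huw : u <+: w) (hvw : v <+: w) : u = v :=
  (prefix_or_prefix_of_prefix huw hvw).elim (hX.2 u hu v hv) fun h => (hX.2 v hv u hu h).symm

theorem IsSuffixCode.eq_of_suffix_of_suffix (hX : IsSuffixCode X) {u v w : List A}
    (hu : u ∈ X) (hv : v ∈ X) (huw : u <:+ w) (hvw : v <:+ w) : u = v :=
  (suffix_or_suffix_of_suffix huw hvw).elim (hX.2 u hu v hv) fun h => (hX.2 v hv u hu h).symm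

theorem IsPrefixCode.append_inj (hX : IsPrefixCode X) {x x' u u' : List A}
    (hx : x ∈ X) (hx' : x' ∈ X) (h : x ++ u = x' ++ u') : x = x' ∧ u = u' := by
  obtain rfl := hX.eq_of_prefix_of_prefix hx hx' (prefix_append x u) (h ▸ prefix_append x' u')
  exact ⟨rfl, append_cancel_left h⟩

theorem IsSuffixCode.append_inj (hX : IsSuffixCode X) {x x' u u' : List A}
    (hx : x ∈ X) (hx' : x' ∈ X) (h : u ++ x = u' ++ x') : u = u' ∧ x = x' := by
  obtain rfl := hX.eq_of_suffix_of_suffix hx hx' (suffix_append u x) (h ▸ suffix_append u' x')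
  exact ⟨append_cancel_right h, rfl⟩

theorem nil_notMem_prodL (hY : ([] : List A) ∉ Y) : ([] : List A) ∉ ProdL X Y := by
  rintro ⟨x, -, y, hy, hxy⟩
  exact hY ((append_eq_nil_iff.mp hxy.symm).2 ▸ hy)

theorem IsPrefixCode.prodL (hX : IsPrefixCode X) (hY : IsPrefixCode Y) :
    IsPrefixCode (ProdL X Y) := by
  refine ⟨nil_notMem_prodL hY.1, ?_⟩
  rintro _ ⟨x₁, hx₁, y₁, hy₁, rfl⟩ _ ⟨x₂, hx₂, y₂, hy₂, rfl⟩ ⟨t, ht⟩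
  rw [append_assoc] at ht
  obtain ⟨rfl, hy⟩ := hX.append_inj hx₁ hx₂ ht
  rw [hY.2 y₁ hy₁ y₂ hy₂ ⟨t, hy⟩]

theorem IsSuffixCode.prodL (hX : IsSuffixCode X) (hY : IsSuffixCode Y) :
    IsSuffixCode (ProdL X Y) := by
  refine ⟨nil_notMem_prodL hY.1, ?_⟩
  rintro _ ⟨x₁, hx₁, y₁, hy₁, rfl⟩ _ ⟨x₂, hx₂, y₂, hy₂, rfl⟩ ⟨t, ht⟩
  rw [← append_assoc] at ht
  obtain ⟨hx, rfl⟩ := hY.append_inj hy₁ hy₂ ht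
  rw [hX.2 x₁ hx₁ x₂ hx₂ ⟨t, hx⟩]

theorem IsBifixCode.prodL (hX : IsBifixCode X) (hY : IsBifixCode Y) :
    IsBifixCode (ProdL X Y) :=
  ⟨hX.1.prodL hY.1, hX.2.prodL hY.2⟩

theorem IsPrefixCode.of_prodL_right (h : IsPrefixCode (ProdL Y X)) (hY : Y.Nonempty)
    (hX : ([] : List A) ∉ X) : IsPrefixCode X := by
  obtain ⟨y, hy⟩ := hY
  refine ⟨hX, fun u hu v hv huv => append_cancel_left (h.2 _ ⟨y, hy, u, hu, rfl⟩ _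
    ⟨y, hy, v, hv, rfl⟩ ((prefix_append_right_inj y).2 huv))⟩

theorem IsSuffixCode.of_prodL_left (h : IsSuffixCode (ProdL X Y)) (hY : Y.Nonempty)
    (hX : ([] : List A) ∉ X) : IsSuffixCode X := by
  obtain ⟨y, hy⟩ := hY
  refine ⟨hX, fun u hu v hv huv => append_cancel_right (h.2 _ ⟨u, hu, y, hy, rfl⟩ _
    ⟨v, hv, y, hy, rfl⟩ (suffix_append_self_iff.2 huv))⟩

theorem IsPrefixCode.insert (hX : IsPrefixCode X) {w : List A} (hw : w ≠ [])
    (hincomp : ∀ x ∈ X, ¬ x <+: w ∧ ¬ w <+: x) : IsPrefixCode (insert w X) := by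
  refine ⟨fun h => (Set.mem_insert_iff.mp h).elim (fun h => hw h.symm) hX.1, ?_⟩
  rintro u (rfl | hu) v (rfl | hv) huv
  · rfl
  · exact absurd huv (hincomp v hv).2
  · exact absurd huv (hincomp u hu).1
  · exact hX.2 u hu v hv huv

theorem IsSuffixCode.insert (hX : IsSuffixCode X) {w : List A} (hw : w ≠ [])
    (hincomp : ∀ x ∈ X, ¬ x <:+ w ∧ ¬ w <:+ x) : IsSuffixCode (insert w X) := by
  refine ⟨fun h => (Set.mem_insert_iff.mp h).elim (fun h => hw h.symm) hX.1, ?_⟩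
  rintro u (rfl | hu) v (rfl | hv) huv
  · rfl
  · exact absurd huv (hincomp v hv).2
  · exact absurd huv (hincomp u hu).1
  · exact hX.2 u hu v hv huv

end PrefixSuffix

section Alternative

variable {A : Type*} {X Y : Set (List A)}

theorem eq_of_alternating_of_flatten_eq (hX : IsPrefixCode X) (hY : IsPrefixCode Y) :
    ∀ us vs : List (List A), (∀ w ∈ us, w ∈ X ∪ Y) → (∀ w ∈ vs, w ∈ X ∪ Y) →
      us.IsChain (fun u v => (u ∈ X → v ∈ Y) ∧ (u ∈ Y → v ∈ X)) →
      vs.IsChain (fun u v => (u ∈ X → v ∈ Y) ∧ (u ∈ Y → v ∈ X)) →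
      (∀ u ∈ us.head?, ∀ v ∈ vs.head?, (u ∈ X ∧ v ∈ X) ∨ (u ∈ Y ∧ v ∈ Y)) →
      us.flatten = vs.flatten → us = vs
  | [], [], _, _, _, _, _, _ => rfl
  | [], v :: vs, _, hvs, _, _, _, h => by
    obtain rfl : v = [] := (append_eq_nil_iff.mp (flatten_cons ▸ h).symm).1
    exact ((hvs [] mem_cons_self).elim hX.1 hY.1).elim
  | u :: us, [], hus, _, _, _, _, h => by
    obtain rfl : u = [] := (append_eq_nil_iff.mp (flatten_cons ▸ h)).1
    exact ((hus [] mem_cons_self).elim hX.1 hY.1).elim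
  | u :: us, v :: vs, hus, hvs, hcu, hcv, hhead, h => by
    rw [flatten_cons, flatten_cons] at h
    have hsame := hhead u rfl v rfl
    obtain ⟨rfl, htail⟩ : u = v ∧ us.flatten = vs.flatten := by
      rcases hsame with ⟨hu, hv⟩ | ⟨hu, hv⟩
      · exact hX.append_inj hu hv h
      · exact hY.append_inj hu hv h
    congr 1
    refine eq_of_alternating_of_flatten_eq hX hY us vs (fun w hw => hus w (mem_cons_of_mem u hw))
      (fun w hw => hvs w (mem_cons_of_mem u hw)) hcu.tail hcv.tail ?_ htail
    intro u' hu' v' hv'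
    obtain ⟨us', rfl⟩ := head?_eq_some_iff.mp hu'
    obtain ⟨vs', rfl⟩ := head?_eq_some_iff.mp hv'
    have hnextU := (isChain_cons_cons.mp hcu).1
    have hnextV := (isChain_cons_cons.mp hcv).1
    rcases hsame with ⟨hu, -⟩ | ⟨hu, -⟩
    · exact Or.inr ⟨hnextU.1 hu, hnextV.1 hu⟩
    · exact Or.inl ⟨hnextU.2 hu, hnextV.2 hu⟩

theorem isAltCode_of_isPrefixCode (hX : IsPrefixCode X) (hY : IsPrefixCode Y)
    (hXne : X.Nonempty) (hYne : Y.Nonempty) : IsAltCode X Y :=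
  ⟨hXne, hYne, hX.1, hY.1, fun us vs hus hvs hsim =>
    eq_of_alternating_of_flatten_eq hX hY us vs hus.2.1 hvs.2.1 hus.2.2 hvs.2.2 hsim.1⟩

theorem isAltInduced_prodL (hX : IsPrefixCode X) (hY : IsPrefixCode Y)
    (hXne : X.Nonempty) (hYne : Y.Nonempty) : IsAltInduced (ProdL X Y) :=
  ⟨X, Y, isAltCode_of_isPrefixCode hX hY hXne hYne, rfl⟩

end Alternative

section Maximal

variable {A : Type*} {X Y : Set (List A)}

theorem IsMaximalPrefixCode.exists_comparable (h : IsMaximalPrefixCode X) (hne : X.Nonempty)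
    (w : List A) : ∃ x ∈ X, x <+: w ∨ w <+: x := by
  by_contra! hincomp
  obtain rfl | hw := eq_or_ne w []
  · obtain ⟨x, hx⟩ := hne
    exact (hincomp x hx).2 nil_prefix
  have hXw := h.2 _ (h.1.insert hw hincomp) (Set.subset_insert w X)
  exact (hincomp w (hXw ▸ Set.mem_insert w X)).1 (prefix_refl w)

theorem isMaximalPrefixCode_of_exists_comparable (hX : IsPrefixCode X)
    (h : ∀ w, ∃ x ∈ X, x <+: w ∨ w <+: x) : IsMaximalPrefixCode X := by
  refine ⟨hX, fun Z hZ hXZ => hXZ.antisymm fun z hz => ?_⟩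
  obtain ⟨x, hx, hxz | hzx⟩ := h z
  · rwa [← hZ.2 x (hXZ hx) z hz hxz]
  · rwa [hZ.2 z hz x (hXZ hx) hzx]

theorem IsMaximalPrefixCode.prodL (hX : IsMaximalPrefixCode X) (hY : IsMaximalPrefixCode Y)
    (hXne : X.Nonempty) (hYne : Y.Nonempty) : IsMaximalPrefixCode (ProdL X Y) := by
  refine isMaximalPrefixCode_of_exists_comparable (hX.1.prodL hY.1) fun w => ?_
  obtain ⟨x, hx, ⟨w', rfl⟩ | hwx⟩ := hX.exists_comparable hXne w
  · obtain ⟨y, hy, hyw | hwy⟩ := hY.exists_comparable hYne w'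
    · exact ⟨x ++ y, ⟨x, hx, y, hy, rfl⟩, Or.inl ((prefix_append_right_inj x).2 hyw)⟩
    · exact ⟨x ++ y, ⟨x, hx, y, hy, rfl⟩, Or.inr ((prefix_append_right_inj x).2 hwy)⟩
  · obtain ⟨y, hy⟩ := hYne
    exact ⟨x ++ y, ⟨x, hx, y, hy, rfl⟩, Or.inr (hwx.trans (prefix_append x y))⟩

theorem IsMaximalPrefixCode.isMaximalBifixCode (h : IsMaximalPrefixCode X)
    (hs : IsSuffixCode X) : IsMaximalBifixCode X :=
  ⟨⟨h.1, hs⟩, fun Z hZ => h.2 Z hZ.1⟩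

theorem IsMaximalBifixCode.of_prodL_left (h : IsMaximalBifixCode (ProdL X Y))
    (hX : IsBifixCode X) (hY : IsBifixCode Y) (hYne : Y.Nonempty) : IsMaximalBifixCode X := by
  refine ⟨hX, fun X' hX' hXX' => hXX'.antisymm fun x' hx' => ?_⟩
  obtain ⟨y, hy⟩ := hYne
  have hprod : ProdL X Y = ProdL X' Y := h.2 _ (hX'.prodL hY) <| by
    rintro _ ⟨x, hx, y, hy, rfl⟩
    exact ⟨x, hXX' hx, y, hy, rfl⟩
  obtain ⟨x, hx, y', hy', hxy⟩ : x' ++ y ∈ ProdL X Y := hprod ▸ ⟨x', hx', y, hy, rfl⟩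
  rwa [(hY.2.append_inj hy hy' hxy).1]

end Maximal

section Thin

variable {A : Type*} {X Y : Set (List A)}

theorem IsThin.prodL (hX : IsThin X) (hY : IsThin Y) : IsThin (ProdL X Y) := by
  obtain ⟨dX, hdX⟩ := hX
  obtain ⟨dY, hdY⟩ := hY
  refine ⟨dX ++ dY, ?_⟩
  rintro u v ⟨x, hx, y, hy, hxy⟩
  rw [show u ++ (dX ++ dY) ++ v = (u ++ dX) ++ (dY ++ v) by simp, append_eq_append_iff] at hxy
  rcases hxy with ⟨s, rfl, -⟩ | ⟨s, -, rfl⟩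
  · exact hdX u s hx
  · exact hdY s v (by rwa [append_assoc])

theorem IsThin.of_prodL_left (h : IsThin (ProdL X Y)) (hY : Y.Nonempty) : IsThin X := by
  obtain ⟨w, hw⟩ := h
  obtain ⟨y, hy⟩ := hY
  exact ⟨w, fun u v huv => hw u (v ++ y) ⟨_, huv, y, hy, by simp⟩⟩

theorem IsThin.exists_ne_nil_forall_not_infix (h : IsThin X) (hne : X.Nonempty) :
    ∃ d ≠ [], ∀ x ∈ X, ¬ d <:+: x := by
  obtain ⟨d, hd⟩ := h
  refine ⟨d, ?_, fun x hx ⟨s, t, hst⟩ => hd s t (hst ▸ hx)⟩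
  rintro rfl
  obtain ⟨x, hx⟩ := hne
  exact hd x [] (by simpa using hx)

end Thin

section KleeneStar

variable {A : Type*} {L : Language A} {d e : List A}

theorem exists_append_mem_kstar (hL : ([] : List A) ∉ L)
    (hsuf : ∀ e, d <:+: e → ∃ x ∈ L, x <:+ e) (w : List A) :
    ∃ t, t ++ w ∈ L∗ := by
  induction hn : w.length using Nat.strong_induction_on generalizing w with
  | _ n ih =>
  obtain ⟨x, hx, hxw⟩ := hsuf (d ++ w) (prefix_append d w).isInfix
  rcases le_or_gt x.length w.length with hle | hlt
  · obtain ⟨w', rfl⟩ := suffix_of_suffix_length_le hxw (suffix_append d w) hle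
    have hx0 : 0 < x.length := length_pos_iff.2 fun h => hL (h ▸ hx)
    obtain ⟨t, ht⟩ := ih w'.length (by simp only [← hn, length_append]; omega) w' rfl
    exact ⟨t, append_assoc t w' x ▸
      kstar_mul_le_kstar (a := L) (Language.append_mem_mul ht hx)⟩
  · obtain ⟨t, rfl⟩ := suffix_of_suffix_length_le (suffix_append d w) hxw hlt.le
    exact ⟨t, le_kstar (a := L) hx⟩

theorem IsPrefixCode.mem_kstar_of_append_mem_kstar (hL : IsPrefixCode L) {u v : List A}
    (hu : u ∈ L∗) (huv : u ++ v ∈ L∗) : v ∈ L∗ := by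
  obtain ⟨U, rfl, hU⟩ := Language.mem_kstar.1 hu
  clear hu
  induction U generalizing v with
  | nil => simpa using huv
  | cons x U ih =>
    have hx := hU x mem_cons_self
    obtain ⟨_ | ⟨y, V⟩, hV, hVL⟩ := Language.mem_kstar.1 huv
    · simp only [flatten_cons, flatten_nil, append_assoc, append_eq_nil_iff] at hV
      exact (hL.1 (hV.1 ▸ hx)).elim
    rw [flatten_cons, flatten_cons, append_assoc] at hV
    obtain ⟨-, hUV⟩ := hL.append_inj hx (hVL y mem_cons_self) hV
    exact ih (fun z hz => hU z (mem_cons_of_mem x hz))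
      (hUV ▸ Language.join_mem_kstar fun z hz => hVL z (mem_cons_of_mem y hz))

theorem exists_drop_append_mem_kstar (hene : e ≠ []) (he : ∀ x ∈ L, ¬ e <:+: x)
    {v r : List A} (h : v ++ e ++ r ∈ L∗) : ∃ c < e.length, e.drop c ++ r ∈ L∗ := by
  obtain ⟨U, hU, hUL⟩ := Language.mem_kstar.1 h
  clear h
  induction U generalizing v with
  | nil => exact (hene (append_eq_nil_iff.1 (append_eq_nil_iff.1 hU).1).2).elim
  | cons x U ih =>
    have hx := hUL x mem_cons_self
    rw [flatten_cons, append_assoc, append_eq_append_iff] at hU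
    rcases hU with ⟨p, rfl, hp⟩ | ⟨v', -, hv'⟩
    · rcases append_eq_append_iff.1 hp with ⟨q, rfl, -⟩ | ⟨q, rfl, hq⟩
      · exact (he _ hx (infix_append' v e q)).elim
      obtain rfl | hqne := eq_or_ne q []
      · exact (he _ hx (by simpa using (suffix_append v p).isInfix)).elim
      refine ⟨p.length, by simpa [length_pos_iff] using hqne, ?_⟩
      rw [drop_left, ← hq]
      exact Language.join_mem_kstar fun z hz => hUL z (mem_cons_of_mem _ hz)
    · exact ih (by rw [hv', append_assoc]) fun z hz => hUL z (mem_cons_of_mem x hz)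

theorem exists_comparable_of_flatten_replicate_mem_kstar (hene : e ≠ []) {k : ℕ} (hk : k ≠ 0)
    (h : (replicate k e).flatten ∈ L∗) : ∃ x ∈ L, x <+: e ∨ e <+: x := by
  obtain ⟨k, rfl⟩ := Nat.exists_eq_succ_of_ne_zero hk
  obtain ⟨_ | ⟨x, U⟩, hU, hUL⟩ := Language.mem_kstar.1 h
  · rw [replicate_succ, flatten_cons, flatten_nil] at hU
    exact (hene (append_eq_nil_iff.1 hU).1).elim
  rw [replicate_succ, flatten_cons, flatten_cons] at hU
  have hxe : x <+: e ++ (replicate k e).flatten := hU ▸ prefix_append x U.flatten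
  exact ⟨x, hUL x mem_cons_self, prefix_or_prefix_of_prefix hxe (prefix_append e _)⟩

theorem IsPrefixCode.exists_prefix_of_forall_not_infix (hL : IsPrefixCode L)
    (hcompl : ∀ w, ∃ t, t ++ w ∈ L∗) (hene : e ≠ []) (he : ∀ x ∈ L, ¬ e <:+: x) :
    ∃ x ∈ L, x <+: e := by
  obtain ⟨t, ht⟩ := hcompl (replicate (e.length + 1) e).flatten
  -- Since no word of `L` contains `e`, each of the `|e| + 1` copies of `e` in `t e^(|e|+1) ∈ L*`
  -- contains a cut point of the factorization. Two of them sit at the same offset `c`, and right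
  -- unitarity of `L*` then puts a nonempty power of `e` in `L*`.
  have hoffset : ∀ m : Fin (e.length + 1),
      ∃ c : Fin e.length, e.drop c ++ (replicate m e).flatten ∈ L∗ := by
    rintro ⟨m, hm⟩
    have hsplit : t ++ (replicate (e.length + 1) e).flatten =
        t ++ (replicate (e.length - m) e).flatten ++ e ++ (replicate m e).flatten := by
      rw [show e.length + 1 = e.length - m + 1 + m by omega, replicate_add, replicate_add]
      simp
    obtain ⟨c, hc, hmem⟩ := exists_drop_append_mem_kstar hene he (hsplit ▸ ht)
    exact ⟨⟨c, hc⟩, hmem⟩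
  choose c hc using hoffset
  obtain ⟨m, m', hne, hcc⟩ := Fintype.exists_ne_map_eq_of_card_lt c (by simp)
  wlog hlt : m < m' generalizing m m'
  · exact this m' m hne.symm hcc.symm (lt_of_le_of_ne (not_lt.1 hlt) hne.symm)
  have hsplit : e.drop (c m') ++ (replicate m' e).flatten =
      e.drop (c m) ++ (replicate m e).flatten ++ (replicate (m' - m) e).flatten := by
    rw [hcc, append_assoc, ← flatten_append, ← replicate_add, Nat.add_sub_cancel' hlt.le]
  obtain ⟨x, hx, hxe | hex⟩ := exists_comparable_of_flatten_replicate_mem_kstar hene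
    (Nat.sub_ne_zero_of_lt hlt) (hL.mem_kstar_of_append_mem_kstar (hc m) (hsplit ▸ hc m'))
  · exact ⟨x, hx, hxe⟩
  · exact (he x hx hex.isInfix).elim

end KleeneStar

section ThinMaximalBifix

variable {A : Type*} {X : Set (List A)} {d : List A}

theorem IsMaximalBifixCode.forall_prefix_or_forall_suffix (h : IsMaximalBifixCode X)
    (hdne : d ≠ []) (hd : ∀ x ∈ X, ¬ d <:+: x) :
    (∀ e, d <:+: e → ∃ x ∈ X, x <+: e) ∨ (∀ e, d <:+: e → ∃ x ∈ X, x <:+ e) := by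
  -- Otherwise `p ++ s` could be added to `X`, where `p` has no prefix and `s` no suffix in `X`.
  by_contra! hcon
  obtain ⟨⟨p, hdp, hp⟩, s, hds, hs⟩ := hcon
  have hps : p ++ s ≠ [] := fun h =>
    hdne (eq_nil_of_infix_nil ((append_eq_nil_iff.1 h).1 ▸ hdp))
  have hprefIncomp : ∀ x ∈ X, ¬ x <+: p ++ s ∧ ¬ p ++ s <+: x := fun x hx =>
    ⟨fun hxps => (prefix_or_prefix_of_prefix hxps (prefix_append p s)).elim (hp x hx)
      fun hpx => hd x hx (hdp.trans hpx.isInfix),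
    fun hpsx => hd x hx (hdp.trans ((prefix_append p s).trans hpsx).isInfix)⟩
  have hsufIncomp : ∀ x ∈ X, ¬ x <:+ p ++ s ∧ ¬ p ++ s <:+ x := fun x hx =>
    ⟨fun hxps => (suffix_or_suffix_of_suffix hxps (suffix_append p s)).elim (hs x hx)
      fun hsx => hd x hx (hds.trans hsx.isInfix),
    fun hpsx => hd x hx (hds.trans ((suffix_append p s).trans hpsx).isInfix)⟩
  have hXps := h.2 _ ⟨h.1.1.insert hps hprefIncomp, h.1.2.insert hps hsufIncomp⟩
    (Set.subset_insert _ X)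
  exact (hprefIncomp _ (hXps ▸ Set.mem_insert _ X)).1 (prefix_refl _)

theorem IsMaximalBifixCode.isMaximalPrefixCode (h : IsMaximalBifixCode X) (hthin : IsThin X)
    (hne : X.Nonempty) : IsMaximalPrefixCode X := by
  obtain ⟨d, hdne, hd⟩ := hthin.exists_ne_nil_forall_not_infix hne
  have hpref : ∀ e, d <:+: e → ∃ x ∈ X, x <+: e := by
    rcases h.forall_prefix_or_forall_suffix hdne hd with hpref | hsuf
    · exact hpref
    · intro e hde
      exact h.1.1.exists_prefix_of_forall_not_infix (exists_append_mem_kstar h.1.1.1 hsuf)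
        (fun he => hdne (eq_nil_of_infix_nil (he ▸ hde)))
        fun x hx hex => hd x hx (hde.trans hex)
  refine isMaximalPrefixCode_of_exists_comparable h.1.1 fun z => ?_
  obtain ⟨x, hx, hxz⟩ := hpref (z ++ d) (suffix_append z d).isInfix
  exact ⟨x, hx, prefix_or_prefix_of_prefix hxz (prefix_append z d)⟩

end ThinMaximalBifix

theorem stmt12_general {A : Type*}
    (X Y : Set (List A)) (hX : X.Nonempty) (hY : Y.Nonempty)
    (hXe : ([] : List A) ∉ X) (hYe : ([] : List A) ∉ Y) :
    ((IsBifixCode (ProdL X Y) ∧ IsAltInduced (ProdL X Y) ∧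
      IsBifixCode (ProdL Y X) ∧ IsAltInduced (ProdL Y X)) ↔
      (IsBifixCode X ∧ IsBifixCode Y)) ∧
    ((IsMaximalBifixCode (ProdL X Y) ∧ IsThin (ProdL X Y) ∧ IsAltInduced (ProdL X Y) ∧
      IsMaximalBifixCode (ProdL Y X) ∧ IsThin (ProdL Y X) ∧ IsAltInduced (ProdL Y X)) ↔
      (IsMaximalBifixCode X ∧ IsThin X ∧ IsMaximalBifixCode Y ∧ IsThin Y)) := by
  have bifix_of_prodL (hXY : IsBifixCode (ProdL X Y)) (hYX : IsBifixCode (ProdL Y X)) :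
      IsBifixCode X ∧ IsBifixCode Y :=
    ⟨⟨hYX.1.of_prodL_right hY hXe, hXY.2.of_prodL_left hY hXe⟩,
      ⟨hXY.1.of_prodL_right hX hYe, hYX.2.of_prodL_left hX hYe⟩⟩
  refine ⟨⟨fun ⟨hXY, _, hYX, _⟩ => bifix_of_prodL hXY hYX, fun ⟨hXb, hYb⟩ => ?_⟩,
    fun ⟨hXY, hXYt, _, hYX, hYXt, _⟩ => ?_, fun ⟨hXm, hXt, hYm, hYt⟩ => ?_⟩
  · exact ⟨hXb.prodL hYb, isAltInduced_prodL hXb.1 hYb.1 hX hY,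
      hYb.prodL hXb, isAltInduced_prodL hYb.1 hXb.1 hY hX⟩
  · obtain ⟨hXb, hYb⟩ := bifix_of_prodL hXY.1 hYX.1
    exact ⟨hXY.of_prodL_left hXb hYb hY, hXYt.of_prodL_left hY,
      hYX.of_prodL_left hYb hXb hX, hYXt.of_prodL_left hX⟩
  · have hXp := hXm.isMaximalPrefixCode hXt hX
    have hYp := hYm.isMaximalPrefixCode hYt hY
    exact ⟨(hXp.prodL hYp hX hY).isMaximalBifixCode (hXm.1.2.prodL hYm.1.2),
      hXt.prodL hYt, isAltInduced_prodL hXm.1.1 hYm.1.1 hX hY,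
      (hYp.prodL hXp hY hX).isMaximalBifixCode (hYm.1.2.prodL hXm.1.2),
      hYt.prodL hXt, isAltInduced_prodL hYm.1.1 hXm.1.1 hY hX⟩

/-- `XY` and `YX` are bifix (maximal bifix thin) alt-induced codes if and only if
`X` and `Y` are bifix (resp. maximal bifix thin) codes. -/
theorem stmt12 {A : Type*} [Fintype A] [Nonempty A]
    (X Y : Set (List A)) (hX : X.Nonempty) (hY : Y.Nonempty)
    (hXe : ([] : List A) ∉ X) (hYe : ([] : List A) ∉ Y) :
    ((IsBifixCode (ProdL X Y) ∧ IsAltInduced (ProdL X Y) ∧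
      IsBifixCode (ProdL Y X) ∧ IsAltInduced (ProdL Y X)) ↔
      (IsBifixCode X ∧ IsBifixCode Y)) ∧
    ((IsMaximalBifixCode (ProdL X Y) ∧ IsThin (ProdL X Y) ∧ IsAltInduced (ProdL X Y) ∧
      IsMaximalBifixCode (ProdL Y X) ∧ IsThin (ProdL Y X) ∧ IsAltInduced (ProdL Y X)) ↔
      (IsMaximalBifixCode X ∧ IsThin X ∧ IsMaximalBifixCode Y ∧ IsThin Y)) :=
  stmt12_general X Y hX hY hXe hYe
end
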